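/- Disjointness of deep combinatorial intervals in the renormalization tiling. Let θ ∈ (0,1) be irrational with convergents pₙ/qₙ and θₙ = qₙθ − pₙ as in the context. Then for every n ≥ 0 and every x ∈ ℝ/ℤ, the qₙ closed arcs Aᵢ := {x + i·θ + u (mod 1) : u in the closed interval with endpoints 0 and θₙ₊₁}, for 0 ≤ i ≤ qₙ − 1, are pairwise disjoint subsets of ℝ/ℤ. (These are the level-(n+1) combinatorial intervals occurring in the level-n renormalization tiling of the circle.) -/

import Mathlib

noncomputable section

open MeasureTheory Set Metric Bornology
open scoped ENNReal NNReal

/-- The Gauss map `x ↦ {1/x}`. -/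
def gaussMap (x : ℝ) : ℝ := Int.fract x⁻¹

/-- `partialQuot θ k` is the partial quotient `a_{k+1}` of `θ = [0; a₁, a₂, …]`. -/
def partialQuot (θ : ℝ) (k : ℕ) : ℕ := (⌊(gaussMap^[k] θ)⁻¹⌋).toNat

/-- Numerators `pₙ` of the convergents: `p₀ = 0`, `p₁ = 1`, `pₙ₊₁ = aₙ₊₁ pₙ + pₙ₋₁`. -/
def convP (θ : ℝ) : ℕ → ℤ
  | 0 => 0
  | 1 => 1
  | n + 2 => (partialQuot θ (n + 1) : ℤ) * convP θ (n + 1) + convP θ n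

/-- Denominators `qₙ` of the convergents: `q₀ = 1`, `q₁ = a₁`, `qₙ₊₁ = aₙ₊₁ qₙ + qₙ₋₁`. -/
def convQ (θ : ℝ) : ℕ → ℤ
  | 0 => 1
  | 1 => (partialQuot θ 0 : ℤ)
  | n + 2 => (partialQuot θ (n + 1) : ℤ) * convQ θ (n + 1) + convQ θ n

/-- `θₙ = qₙ·θ − pₙ`. -/
def thetaN (θ : ℝ) (n : ℕ) : ℝ := (convQ θ n : ℝ) * θ - (convP θ n : ℝ)

/-- `ℓₙ = |θₙ|`. -/
def ellN (θ : ℝ) (n : ℕ) : ℝ := |thetaN θ n|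

namespace RTaux

variable {θ : ℝ}

lemma iter_spec (hθ : Irrational θ) (hθ01 : θ ∈ Ioo (0:ℝ) 1) (k : ℕ) :
    gaussMap^[k] θ ∈ Ioo (0:ℝ) 1 ∧ Irrational (gaussMap^[k] θ) := by
  induction k with
  | zero => exact ⟨hθ01, hθ⟩
  | succ k ih =>
    obtain ⟨⟨h0, h1⟩, hirr⟩ := ih
    rw [Function.iterate_succ_apply']
    have hinv : Irrational (gaussMap^[k] θ)⁻¹ := hirr.inv
    have hfr : Irrational (Int.fract (gaussMap^[k] θ)⁻¹) := by
      unfold Int.fract; exact hinv.sub_intCast _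
    refine ⟨⟨?_, ?_⟩, hfr⟩
    · exact lt_of_le_of_ne (Int.fract_nonneg _) (by simpa [gaussMap] using (hfr.ne_int 0).symm)
    · exact Int.fract_lt_one _

lemma floor_inv_pos (hθ : Irrational θ) (hθ01 : θ ∈ Ioo (0:ℝ) 1) (k : ℕ) :
    1 ≤ ⌊(gaussMap^[k] θ)⁻¹⌋ := by
  obtain ⟨⟨h0, h1⟩, _⟩ := iter_spec hθ hθ01 k
  have : (1:ℝ) ≤ (gaussMap^[k] θ)⁻¹ := by
    rw [le_inv_comm₀] <;> simp_all <;> linarith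
  exact_mod_cast Int.le_floor.2 (by exact_mod_cast this)

lemma partialQuot_cast (hθ : Irrational θ) (hθ01 : θ ∈ Ioo (0:ℝ) 1) (k : ℕ) :
    ((partialQuot θ k : ℕ) : ℝ) = (⌊(gaussMap^[k] θ)⁻¹⌋ : ℝ) := by
  unfold partialQuot
  exact_mod_cast congrArg (Int.cast : ℤ → ℝ)
    (Int.toNat_of_nonneg (by linarith [floor_inv_pos hθ hθ01 k]))

lemma partialQuot_pos (hθ : Irrational θ) (hθ01 : θ ∈ Ioo (0:ℝ) 1) (k : ℕ) :
    1 ≤ partialQuot θ k := by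
  have := floor_inv_pos hθ hθ01 k
  unfold partialQuot; omega

lemma iter_succ_eq (hθ : Irrational θ) (hθ01 : θ ∈ Ioo (0:ℝ) 1) (k : ℕ) :
    gaussMap^[k+1] θ = (gaussMap^[k] θ)⁻¹ - (partialQuot θ k : ℝ) := by
  rw [Function.iterate_succ_apply']
  show Int.fract _ = _
  rw [Int.fract, partialQuot_cast hθ hθ01 k]

lemma theta_succ (hθ : Irrational θ) (hθ01 : θ ∈ Ioo (0:ℝ) 1) (k : ℕ) :
    thetaN θ (k+1) = -(thetaN θ k) * gaussMap^[k+1] θ := by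
  induction k with
  | zero =>
    have h := iter_succ_eq hθ hθ01 0
    simp only [Function.iterate_zero_apply] at h
    rw [h]
    unfold thetaN convQ convP
    have hθ0 : θ ≠ 0 := ne_of_gt hθ01.1
    field_simp
    push_cast
    ring
  | succ k ih =>
    have h := iter_succ_eq hθ hθ01 (k+1)
    rw [h]
    have hne : gaussMap^[k+1] θ ≠ 0 := ne_of_gt (iter_spec hθ hθ01 (k+1)).1.1
    have hrec : thetaN θ (k+2) = (partialQuot θ (k+1) : ℝ) * thetaN θ (k+1) + thetaN θ k := by
      unfold thetaN
      show ((convQ θ (k+2) : ℝ)) * θ - _ = _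
      rw [show convQ θ (k+2) = (partialQuot θ (k+1) : ℤ) * convQ θ (k+1) + convQ θ k from rfl,
          show convP θ (k+2) = (partialQuot θ (k+1) : ℤ) * convP θ (k+1) + convP θ k from rfl]
      push_cast; ring
    have hx : thetaN θ (k+1) * (gaussMap^[k+1] θ)⁻¹ = -thetaN θ k := by
      rw [ih, mul_assoc, mul_inv_cancel₀ hne, mul_one]
    rw [hrec]
    linear_combination hx

lemma theta_ne (hθ : Irrational θ) (hθ01 : θ ∈ Ioo (0:ℝ) 1) (k : ℕ) :
    thetaN θ k ≠ 0 := by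
  induction k with
  | zero =>
    unfold thetaN convQ convP; simpa using ne_of_gt hθ01.1
  | succ k ih =>
    rw [theta_succ hθ hθ01 k]
    exact mul_ne_zero (neg_ne_zero.2 ih) (ne_of_gt (iter_spec hθ hθ01 (k+1)).1.1)

lemma ell_pos (hθ : Irrational θ) (hθ01 : θ ∈ Ioo (0:ℝ) 1) (k : ℕ) : 0 < ellN θ k :=
  abs_pos.2 (theta_ne hθ hθ01 k)

lemma ell_lt (hθ : Irrational θ) (hθ01 : θ ∈ Ioo (0:ℝ) 1) (k : ℕ) :
    ellN θ (k+1) < ellN θ k := by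
  unfold ellN
  rw [theta_succ hθ hθ01 k, abs_mul, abs_neg]
  obtain ⟨⟨h0, h1⟩, _⟩ := iter_spec hθ hθ01 (k+1)
  have := abs_pos.2 (theta_ne hθ hθ01 k)
  rw [abs_of_pos h0]
  nlinarith

lemma theta_sign (hθ : Irrational θ) (hθ01 : θ ∈ Ioo (0:ℝ) 1) (k : ℕ) :
    thetaN θ k * thetaN θ (k+1) < 0 := by
  rw [theta_succ hθ hθ01 k]
  have h0 := (iter_spec hθ hθ01 (k+1)).1.1
  have hne : 0 < thetaN θ k * thetaN θ k := mul_self_pos.2 (theta_ne hθ hθ01 k)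
  nlinarith

lemma convQ_pos (hθ : Irrational θ) (hθ01 : θ ∈ Ioo (0:ℝ) 1) : ∀ k, 1 ≤ convQ θ k := by
  have h0 : (1:ℤ) ≤ convQ θ 0 := le_refl _
  have h1 : (1:ℤ) ≤ convQ θ 1 := by
    show (1:ℤ) ≤ (partialQuot θ 0 : ℤ)
    exact_mod_cast partialQuot_pos hθ hθ01 0
  intro k
  induction k using Nat.twoStepInduction with
  | zero => exact h0
  | one => exact h1
  | more k ih1 ih2 =>
    show (1:ℤ) ≤ (partialQuot θ (k+1) : ℤ) * convQ θ (k+1) + convQ θ k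
    have := partialQuot_pos hθ hθ01 (k+1)
    have h2 : (1:ℤ) ≤ (partialQuot θ (k+1) : ℤ) := by exact_mod_cast this
    nlinarith

lemma det_eq (k : ℕ) :
    convP θ (k+1) * convQ θ k - convP θ k * convQ θ (k+1) = (-1)^k := by
  induction k with
  | zero => simp [convP, convQ]
  | succ k ih =>
    show ((partialQuot θ (k+1) : ℤ) * convP θ (k+1) + convP θ k) * convQ θ (k+1) -
        convP θ (k+1) * ((partialQuot θ (k+1) : ℤ) * convQ θ (k+1) + convQ θ k) = (-1)^(k+1)
    rw [pow_succ]
    linear_combination (-1 : ℤ) * ih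

lemma abs_add_ge {a b : ℝ} (h : 0 ≤ a * b) : |b| ≤ |a + b| := by
  rw [← Real.sqrt_sq_eq_abs, ← Real.sqrt_sq_eq_abs]
  apply Real.sqrt_le_sqrt
  nlinarith

lemma best_approx_pos (hθ : Irrational θ) (hθ01 : θ ∈ Ioo (0:ℝ) 1) (k : ℕ) (d m : ℤ)
    (hd : 0 < d) (hd2 : d < convQ θ (k+1)) : ellN θ k ≤ |(d : ℝ) * θ - m| := by
  set p0 := convP θ k with hp0
  set p1 := convP θ (k+1) with hp1
  set q0 := convQ θ k with hq0
  set q1 := convQ θ (k+1) with hq1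
  have hdet : p1 * q0 - p0 * q1 = (-1)^k := det_eq k
  set D : ℤ := (-1)^k with hD
  have hDsq : D * D = 1 := by
    rw [hD, ← pow_add]; exact Even.neg_one_pow ⟨k, rfl⟩
  set α : ℤ := -D * (p0 * d - q0 * m) with hα
  set β : ℤ := -D * (q1 * m - p1 * d) with hβ
  have h1 : α * q1 + β * q0 = d := by
    have : α * q1 + β * q0 = D * d * (p1 * q0 - p0 * q1) := by rw [hα, hβ]; ring
    rw [this, hdet]
    linear_combination d * hDsq
  have h2 : α * p1 + β * p0 = m := by
    have : α * p1 + β * p0 = D * m * (p1 * q0 - p0 * q1) := by rw [hα, hβ]; ring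
    rw [this, hdet]
    linear_combination m * hDsq
  have hkey : (d : ℝ) * θ - m = α * thetaN θ (k+1) + β * thetaN θ k := by
    have h1' : (α : ℝ) * q1 + β * q0 = d := by exact_mod_cast congrArg (Int.cast : ℤ → ℝ) h1
    have h2' : (α : ℝ) * p1 + β * p0 = m := by exact_mod_cast congrArg (Int.cast : ℤ → ℝ) h2
    unfold thetaN
    rw [← hp0, ← hp1, ← hq0, ← hq1]
    linear_combination (-θ) * h1' + h2'
  have hq0pos : 1 ≤ q0 := convQ_pos hθ hθ01 k
  have hq1pos : 1 ≤ q1 := convQ_pos hθ hθ01 (k+1)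
  rw [hkey]
  have hβne : β ≠ 0 := by
    intro h
    rw [h] at h1
    simp at h1
    -- α * q1 = d, 0 < d < q1
    rcases lt_trichotomy α 0 with ha | ha | ha
    · nlinarith
    · rw [ha] at h1; simp at h1; omega
    · nlinarith
  have hsign : 0 ≤ (α : ℝ) * thetaN θ (k+1) * ((β : ℝ) * thetaN θ k) := by
    rcases eq_or_ne α 0 with ha | ha
    · simp [ha]
    · -- both nonzero; show α β < 0
      have hαβ : α * β < 0 := by
        rcases lt_trichotomy α 0 with h' | h' | h'
        · rcases lt_trichotomy β 0 with h'' | h'' | h''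
          · exfalso; nlinarith
          · exact absurd h'' hβne
          · nlinarith
        · exact absurd h' ha
        · rcases lt_trichotomy β 0 with h'' | h'' | h''
          · nlinarith
          · exact absurd h'' hβne
          · exfalso; nlinarith
      have hts := theta_sign hθ hθ01 k
      have : ((α : ℝ) * β) < 0 := by exact_mod_cast hαβ
      nlinarith
  calc ellN θ k ≤ |(β : ℝ) * thetaN θ k| := by
        rw [abs_mul]
        have hβ1 : (1:ℝ) ≤ |(β : ℝ)| := by
          rw [← Int.cast_abs]
          exact_mod_cast Int.one_le_abs hβne
        have := ell_pos hθ hθ01 k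
        unfold ellN at *
        nlinarith
    _ ≤ |(α : ℝ) * thetaN θ (k+1) + (β : ℝ) * thetaN θ k| := abs_add_ge hsign

lemma best_approx (hθ : Irrational θ) (hθ01 : θ ∈ Ioo (0:ℝ) 1) (k : ℕ) (d m : ℤ)
    (hd : d ≠ 0) (hd2 : |d| < convQ θ (k+1)) : ellN θ k ≤ |(d : ℝ) * θ - m| := by
  rcases lt_trichotomy d 0 with h | h | h
  · rw [abs_of_neg h] at hd2
    have := best_approx_pos hθ hθ01 k (-d) (-m) (by omega) (by omega)
    have heq : |((-d : ℤ) : ℝ) * θ - ((-m : ℤ) : ℝ)| = |(d : ℝ) * θ - m| := by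
      push_cast
      rw [← abs_neg]
      ring_nf
    rwa [heq] at this
  · exact absurd h hd
  · rw [abs_of_pos h] at hd2
    exact best_approx_pos hθ hθ01 k d m h hd2

end RTaux

/-- **Disjointness of deep combinatorial intervals in the renormalization tiling.** For
irrational `θ ∈ (0,1)`, every `n` and `x ∈ ℝ/ℤ`, the `qₙ` arcs
`Aᵢ = {x + iθ + u : u` between `0` and `θₙ₊₁}`, `0 ≤ i ≤ qₙ − 1`, are pairwise disjoint. -/
theorem renormalization_tiling_disjoint (θ : ℝ) (hθ : Irrational θ)
    (hθ01 : θ ∈ Ioo (0:ℝ) 1) (n : ℕ) (x : ℝ) :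
    ∀ i j : ℕ, (i : ℤ) < convQ θ n → (j : ℤ) < convQ θ n → i ≠ j →
      Disjoint
        ((fun u : ℝ => ((x + i * θ + u : ℝ) : AddCircle (1:ℝ))) ''
          uIcc 0 (thetaN θ (n + 1)))
        ((fun u : ℝ => ((x + j * θ + u : ℝ) : AddCircle (1:ℝ))) ''
          uIcc 0 (thetaN θ (n + 1))) := by

  intro i j hi hj hij
  rw [Set.disjoint_left]
  rintro z ⟨u, hu, rfl⟩ ⟨v, hv, hzv⟩
  have hmem : ((x + j*θ + v) - (x + i*θ + u)) ∈ AddSubgroup.zmultiples (1:ℝ) := by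
    rwa [← QuotientAddGroup.eq_iff_sub_mem]
  obtain ⟨m, hm⟩ := AddSubgroup.mem_zmultiples_iff.mp hmem
  rw [zsmul_eq_mul, mul_one] at hm
  -- handle n = 0
  match n, hi, hj with
  | 0, hi, hj =>
    have hq : convQ θ 0 = 1 := rfl
    rw [hq] at hi hj
    exact hij (by omega)
  | (k+1), hi, hj =>
    set t := thetaN θ (k + 1 + 1) with ht
    rw [Set.uIcc, Set.mem_Icc] at hu hv
    have habs : |u - v| ≤ |t| := by
      have h4 : (0:ℝ) ⊔ t - 0 ⊓ t = |t| := by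
        rcases le_total (0:ℝ) t with h | h
        · rw [sup_eq_right.2 h, inf_eq_left.2 h, abs_of_nonneg h]; ring
        · rw [sup_eq_left.2 h, inf_eq_right.2 h, abs_of_nonpos h]; ring
      rw [abs_sub_le_iff]
      constructor <;> [linarith [hu.2, hv.1]; linarith [hv.2, hu.1]]
    have hd : ((j:ℤ) - i) ≠ 0 := by
      intro h; exact hij (by omega)
    have hd2 : |(j:ℤ) - i| < convQ θ (k+1) := by
      rw [abs_lt]
      have h0i : (0:ℤ) ≤ (i:ℤ) := Int.natCast_nonneg i
      have h0j : (0:ℤ) ≤ (j:ℤ) := Int.natCast_nonneg j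
      omega
    have hba := RTaux.best_approx hθ hθ01 k ((j:ℤ) - i) m hd hd2
    have heq : (((j:ℤ) - i : ℤ) : ℝ) * θ - (m : ℝ) = u - v := by
      push_cast
      linarith [hm]
    rw [heq] at hba
    have l1 := RTaux.ell_lt hθ hθ01 k
    have l2 := RTaux.ell_lt hθ hθ01 (k+1)
    unfold ellN at hba l1 l2
    rw [← ht] at l2
    linarith
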